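/- arXiv:1007.3964 — 3 statements merged into one kernel-verified Lean document; each statement's English description precedes it below -/
import Mathlib

section
/- Let T be a binary phylogenetic X-tree with |X| ≥ 3, let f be a character on X that is homoplasy-free on T, and let k ∈ X. Then l_{T|_{X∖{k}}}(f|_{X∖{k}}) = l_T(f) if the state f(k) is also taken by some taxon in X∖{k} (i.e. f(k) ∈ f(X∖{k})), and l_{T|_{X∖{k}}}(f|_{X∖{k}}) = l_T(f) − 1 otherwise. -/
/-!
Basic definitions for Maximum Parsimony / Maximum Likelihood phylogenetics.

A *binary phylogenetic X-tree* is a finite simple graph that is a tree (connected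
and acyclic) whose degree-1 vertices are exactly the (images of the) taxa in `X`,
all other vertices having degree 3.
-/

/-- The number of edges of the graph `G` on which the vertex labeling `g` changes state
(i.e. edges `{u,v}` with `g u ≠ g v`). -/
noncomputable def changedEdges {V C : Type} (G : SimpleGraph V) (g : V → C) : ℕ :=
  {e ∈ G.edgeSet | ¬ (Sym2.map g e).IsDiag}.ncard

/-- The parsimony score of a character `f : X → C` on the graph `G`, whose taxa are
embedded via `ι : X → V`: the minimum number of change-edges over all extensions
`g : V → C` of `f`. -/
noncomputable def gScore {V X C : Type} (G : SimpleGraph V) (ι : X → V) (f : X → C) : ℕ :=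
  sInf { n : ℕ | ∃ g : V → C, (∀ x, g (ι x) = f x) ∧ n = changedEdges G g }

/-- The parsimony score of an alignment (finite sequence of characters). -/
noncomputable def gScoreA {V X C : Type} (G : SimpleGraph V) (ι : X → V)
    (S : List (X → C)) : ℕ :=
  (S.map (gScore G ι)).sum

/-- A binary phylogenetic `X`-tree: a finite simple graph which is a tree (connected and
acyclic), with an injective embedding `ι` of the taxon set `X` as its vertices of degree 1,
every vertex not in the image of `ι` having degree 3. -/
structure PhyloTree (X : Type) : Type 1 where
  V : Type
  G : SimpleGraph V
  ι : X → V
  finV : Finite V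
  inj : Function.Injective ι
  conn : G.Connected
  acyc : G.IsAcyclic
  leafDeg : ∀ x : X, (G.neighborSet (ι x)).ncard = 1
  innerDeg : ∀ v : V, v ∉ Set.range ι → (G.neighborSet v).ncard = 3

namespace PhyloTree

variable {X C : Type}

/-- Parsimony score `l_T(f)` of a character on a binary phylogenetic tree. -/
noncomputable def score (T : PhyloTree X) (f : X → C) : ℕ := gScore T.G T.ι f

/-- Parsimony score `l_T(S)` of an alignment on a binary phylogenetic tree. -/
noncomputable def scoreA (T : PhyloTree X) (S : List (X → C)) : ℕ := gScoreA T.G T.ι S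

/-- The set of vertices of `T` lying on a path between two taxa of `Y`. -/
def span (T : PhyloTree X) (Y : Set X) : Set T.V :=
  {v | ∃ x ∈ Y, ∃ y ∈ Y, ∃ p : T.G.Walk (T.ι x) (T.ι y), p.IsPath ∧ v ∈ p.support}

lemma ι_mem_span (T : PhyloTree X) {Y : Set X} {y : X} (hy : y ∈ Y) : T.ι y ∈ T.span Y :=
  ⟨y, hy, y, hy, SimpleGraph.Walk.nil, SimpleGraph.Walk.IsPath.nil,
    SimpleGraph.Walk.start_mem_support _⟩

/-- Parsimony score of the restricted character `f|_Y` on the restricted tree `T|_Y`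
(the subgraph of `T` induced on the set of vertices lying on paths between taxa of `Y`). -/
noncomputable def restScore (T : PhyloTree X) (Y : Set X) (f : X → C) : ℕ :=
  gScore (T.G.induce (T.span Y)) (fun y : Y => ⟨T.ι y, T.ι_mem_span y.2⟩) (fun y : Y => f y)

/-- Parsimony score of the restricted alignment `S|_Y` on the restricted tree `T|_Y`. -/
noncomputable def restScoreA (T : PhyloTree X) (Y : Set X) (S : List (X → C)) : ℕ :=
  (S.map (T.restScore Y)).sum

end PhyloTree

/-- The restriction `S|_Y` of an alignment to a subset `Y` of the taxa. -/
def subAl {X C : Type} (Y : Set X) (S : List (X → C)) : List (↥Y → C) :=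
  S.map fun f y => f y.1

/-- Two binary phylogenetic `X`-trees are isomorphic as `X`-trees if there is a graph
isomorphism between them fixing every taxon. -/
def PhyloIso {X : Type} (T T' : PhyloTree X) : Prop :=
  ∃ e : T.G ≃g T'.G, ∀ x, e (T.ι x) = T'.ι x

/-- `T` is a maximum parsimony (MP) tree for the alignment `S`. -/
def PhyloTree.IsMP {X C : Type} (T : PhyloTree X) (S : List (X → C)) : Prop :=
  ∀ T' : PhyloTree X, T.scoreA S ≤ T'.scoreA S

/-- `T` is the unique maximum parsimony tree for `S`: it is an MP tree and every tree not
isomorphic to it (fixing the taxa) has strictly larger parsimony score. -/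
def PhyloTree.IsUniqueMP {X C : Type} (T : PhyloTree X) (S : List (X → C)) : Prop :=
  T.IsMP S ∧ ∀ T' : PhyloTree X, ¬ PhyloIso T T' → T.scoreA S < T'.scoreA S

/-- The caterpillar tree `((i,j),k,(l,m))` on five taxa: there are internal vertices
`a, c, b` with edges `{i,a},{j,a},{a,c},{k,c},{c,b},{l,b},{m,b}`. -/
def PhyloTree.Cat5 (T : PhyloTree (Fin 5)) (i j k l m : Fin 5) : Prop :=
  ∃ a c b : T.V, T.G.Adj (T.ι i) a ∧ T.G.Adj (T.ι j) a ∧ T.G.Adj a c ∧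
    T.G.Adj (T.ι k) c ∧ T.G.Adj c b ∧ T.G.Adj (T.ι l) b ∧ T.G.Adj (T.ι m) b

/-- The caterpillar tree `(((i,j),k),(l,(m,n)))` on six taxa: internal vertices `a,b,c,d`
with edges `{i,a},{j,a},{a,b},{k,b},{b,c},{l,c},{c,d},{m,d},{n,d}`. -/
def PhyloTree.Cat6 (T : PhyloTree (Fin 6)) (i j k l m n : Fin 6) : Prop :=
  ∃ a b c d : T.V, T.G.Adj (T.ι i) a ∧ T.G.Adj (T.ι j) a ∧ T.G.Adj a b ∧
    T.G.Adj (T.ι k) b ∧ T.G.Adj b c ∧ T.G.Adj (T.ι l) c ∧ T.G.Adj c d ∧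
    T.G.Adj (T.ι m) d ∧ T.G.Adj (T.ι n) d

/-- The quartet tree `((x₁,x₂),(x₃,x₄))`: internal vertices `u,v` with edges
`{x₁,u},{x₂,u},{u,v},{x₃,v},{x₄,v}`. -/
def PhyloTree.Cherries {X : Type} (T : PhyloTree X) (x₁ x₂ x₃ x₄ : X) : Prop :=
  ∃ u v : T.V, T.G.Adj (T.ι x₁) u ∧ T.G.Adj (T.ι x₂) u ∧ T.G.Adj u v ∧
    T.G.Adj (T.ι x₃) v ∧ T.G.Adj (T.ι x₄) v

/-- The tree `T` displays the quartet split `x₁x₂ | x₃x₄`: the path from `x₁` to `x₂`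
is vertex-disjoint from the path from `x₃` to `x₄`. (For a quartet tree on the four
taxa `x₁,…,x₄` this says exactly that its cherries are `{x₁,x₂}` and `{x₃,x₄}`;
for a larger tree it says that the restriction of `T` to `{x₁,x₂,x₃,x₄}`, with
degree-2 vertices suppressed, is the quartet tree `((x₁,x₂),(x₃,x₄))`.) -/
def PhyloTree.Split {X : Type} (T : PhyloTree X) (x₁ x₂ x₃ x₄ : X) : Prop :=
  ∃ (p : T.G.Walk (T.ι x₁) (T.ι x₂)) (q : T.G.Walk (T.ι x₃) (T.ι x₄)),
    p.IsPath ∧ q.IsPath ∧ ∀ v, v ∈ p.support → v ∉ q.support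

/-- A quartet tree `Q` on a four-element subset `Y ⊆ X` is compatible with the
`X`-tree `T` if the partition of `Y` into the two cherries of `Q` agrees with the
quartet split displayed by `T` on `Y`. -/
def QuartetCompat {X : Type} {Y : Set X} (Q : PhyloTree ↥Y) (T : PhyloTree X) : Prop :=
  ∃ y₁ y₂ y₃ y₄ : ↥Y, y₁ ≠ y₂ ∧ y₁ ≠ y₃ ∧ y₁ ≠ y₄ ∧ y₂ ≠ y₃ ∧ y₂ ≠ y₄ ∧ y₃ ≠ y₄ ∧
    ({y₁, y₂, y₃, y₄} : Set ↥Y) = Set.univ ∧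
    Q.Cherries y₁ y₂ y₃ y₄ ∧ T.Split y₁.1 y₂.1 y₃.1 y₄.1

/-- The binary phylogenetic `Y`-tree `Q` is (up to isomorphism) the tree `T‖_Y` obtained
from `T|_Y` by suppressing its degree-2 vertices: equivalently (binary trees being
determined by their quartet splits), `Q` displays exactly the quartet splits of `T`
on taxa from `Y`. -/
def DisplaysRestriction {X : Type} (Y : Set X) (Q : PhyloTree ↥Y) (T : PhyloTree X) : Prop :=
  ∀ y₁ y₂ y₃ y₄ : ↥Y, (Q.Split y₁ y₂ y₃ y₄ ↔ T.Split y₁.1 y₂.1 y₃.1 y₄.1)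

/-- The likelihood `P(f | G, p)` of a character `f` under the fully symmetric `N_r`-model
on the graph `G` (taxa embedded via `ι`) with substitution probabilities `p` on the edges:
`(1/r) · Σ_g Π_{e ∈ E(G)} w_e(g)`, summed over all extensions `g` of `f`, where
`w_e(g) = p e` if `g` changes state along `e` and `w_e(g) = 1 - (r-1) p e` otherwise. -/
noncomputable def charLik {V X C : Type} [DecidableEq C] (r : ℕ) (G : SimpleGraph V)
    (ι : X → V) (f : X → C) (p : Sym2 V → ℝ) : ℝ :=
  (1 / (r : ℝ)) * ∑ᶠ g ∈ {g : V → C | ∀ x, g (ι x) = f x},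
    ∏ᶠ e ∈ G.edgeSet, (if (Sym2.map g e).IsDiag then 1 - ((r : ℝ) - 1) * p e else p e)

/-- `max P(f|T)`: the supremum of the likelihood of the character `f` on the binary
phylogenetic tree `T` under the `N_r`-model, over all edge parameters `0 ≤ p e ≤ 1/r`. -/
noncomputable def PhyloTree.maxLik {X C : Type} [DecidableEq C] (T : PhyloTree X) (r : ℕ)
    (f : X → C) : ℝ :=
  sSup { L : ℝ | ∃ p : Sym2 T.V → ℝ,
    (∀ e ∈ T.G.edgeSet, 0 ≤ p e ∧ p e ≤ 1 / (r : ℝ)) ∧ L = charLik r T.G T.ι f p }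

/-- `max P(S|T)` under the `N_r`-model with *no common mechanism*: the product over the
characters of the alignment of their individually maximized likelihoods. -/
noncomputable def PhyloTree.maxLikA {X C : Type} [DecidableEq C] (T : PhyloTree X) (r : ℕ)
    (S : List (X → C)) : ℝ :=
  (S.map (T.maxLik r)).prod

/-- `T` is a maximum likelihood (ML) tree for `S` under the `N_r`-model with no common
mechanism. -/
def PhyloTree.IsML {X C : Type} [DecidableEq C] (T : PhyloTree X) (r : ℕ)
    (S : List (X → C)) : Prop :=
  ∀ T' : PhyloTree X, T'.maxLikA r S ≤ T.maxLikA r S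

/-- `T` is the unique ML tree for `S` under the `N_r`-model with no common mechanism. -/
def PhyloTree.IsUniqueML {X C : Type} [DecidableEq C] (T : PhyloTree X) (r : ℕ)
    (S : List (X → C)) : Prop :=
  T.IsML r S ∧ ∀ T' : PhyloTree X, ¬ PhyloIso T T' → T'.maxLikA r S < T.maxLikA r S

/-!
On a connected graph a labelling with `m` colours changes along at least `m - 1` edges: merging
one colour class into the colour of a neighbouring vertex loses one colour and strictly decreases
the number of change edges, so induction applies. Hence `l_{T|Y}(f|Y) ≥ |f(Y)| - 1`. Conversely,
restricting an optimal extension of `f` on `T` to `T|Y` creates no change edges, so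
`l_{T|Y}(f|Y) ≤ l_T(f) = |f(X)| - 1`. When `f k` occurs only at `k`, merging the class of `f k`
into a neighbouring class before restricting keeps `f` on `X ∖ {k}` and saves one more edge.
-/

open SimpleGraph

lemma Set.range_eq_insert_image_setOf_ne {α β : Type*} (f : α → β) (a : α) :
    Set.range f = insert (f a) (f '' {x | x ≠ a}) := by
  ext
  grind

section ChangeEdges

variable {V W C D : Type} {G : SimpleGraph V}

def changeEdgeSet (G : SimpleGraph V) (g : V → C) : Set (Sym2 V) :=
  {e ∈ G.edgeSet | ¬ (Sym2.map g e).IsDiag}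

lemma changedEdges_eq_ncard (G : SimpleGraph V) (g : V → C) :
    changedEdges G g = (changeEdgeSet G g).ncard := rfl

lemma mk_mem_changeEdgeSet {g : V → C} {u v : V} :
    s(u, v) ∈ changeEdgeSet G g ↔ G.Adj u v ∧ g u ≠ g v := by
  simp [changeEdgeSet]

lemma changedEdges_comp_lt [Finite V] {g : V → C} (ψ : C → D) {a b : V} (hab : G.Adj a b)
    (hne : g a ≠ g b) (hψ : ψ (g a) = ψ (g b)) :
    changedEdges G (ψ ∘ g) < changedEdges G g := by
  rw [changedEdges_eq_ncard, changedEdges_eq_ncard]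
  refine Set.ncard_lt_ncard ⟨fun e he => ?_, fun hsub => ?_⟩
  · induction e using Sym2.ind with
    | _ u v =>
      rw [mk_mem_changeEdgeSet] at he ⊢
      exact ⟨he.1, fun h => he.2 (congrArg ψ h)⟩
  · exact (mk_mem_changeEdgeSet.1 (hsub (mk_mem_changeEdgeSet.2 ⟨hab, hne⟩))).2 hψ

lemma changedEdges_comp_embedding_le [Finite W] {H : SimpleGraph W} (φ : G ↪g H) (g : W → C) :
    changedEdges G (g ∘ φ) ≤ changedEdges H g := by
  rw [changedEdges_eq_ncard, changedEdges_eq_ncard]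
  refine Set.ncard_le_ncard_of_injOn (Sym2.map φ) (fun e he => ?_)
    (Sym2.map.injective φ.injective).injOn
  induction e using Sym2.ind with
  | _ u v =>
    rw [mk_mem_changeEdgeSet] at he
    rw [Sym2.map_mk, mk_mem_changeEdgeSet]
    exact ⟨φ.map_adj_iff.2 he.1, he.2⟩

lemma exists_changedEdges_recolor_lt [Finite V] [DecidableEq C] (hG : G.Preconnected)
    (g : V → C) {u v : V} (huv : g u ≠ g v) :
    ∃ c : C, changedEdges G (fun w => if g w = g u then c else g w) < changedEdges G g := by
  obtain ⟨d, -, hd, hd'⟩ := (hG u v).some.exists_boundary_dart {w | g w = g u} rfl huv.symm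
  simp only [Set.mem_ofPred_eq] at hd hd'
  refine ⟨g d.snd, changedEdges_comp_lt (fun x => if x = g u then g d.snd else x) d.adj
    (fun h => hd' (h.symm.trans hd)) ?_⟩
  simp [hd, hd']

lemma ncard_range_le_changedEdges_add_one [Finite V] (hG : G.Preconnected) (g : V → C) :
    (Set.range g).ncard ≤ changedEdges G g + 1 := by
  classical
  induction h : changedEdges G g using Nat.strong_induction_on generalizing g with
  | _ n ih =>
    by_cases hconst : ∀ u v, g u = g v
    · have hle_one : (Set.range g).ncard ≤ 1 := (Set.ncard_le_one (Set.toFinite _)).2 (by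
        rintro _ ⟨u, rfl⟩ _ ⟨v, rfl⟩
        exact hconst u v)
      omega
    push Not at hconst
    obtain ⟨u, v, huv⟩ := hconst
    obtain ⟨c, hc⟩ := exists_changedEdges_recolor_lt hG g huv
    have hrange :
        Set.range g ⊆ insert (g u) (Set.range fun w => if g w = g u then c else g w) := by
      rintro _ ⟨w, rfl⟩
      by_cases hw : g w = g u
      · exact Or.inl hw
      · exact Or.inr ⟨w, if_neg hw⟩
    have hle_succ := (Set.ncard_le_ncard hrange).trans (Set.ncard_insert_le _ _)
    have hrecolor := ih _ (h ▸ hc) _ rfl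
    omega

end ChangeEdges

section Score

variable {V X C : Type} {G : SimpleGraph V} {ι : X → V}

lemma gScore_le_changedEdges {f : X → C} {g : V → C} (hg : ∀ x, g (ι x) = f x) :
    gScore G ι f ≤ changedEdges G g :=
  Nat.sInf_le ⟨g, hg, rfl⟩

lemma exists_changedEdges_eq_gScore [Nonempty C] (G : SimpleGraph V) (hι : ι.Injective)
    (f : X → C) :
    ∃ g : V → C, (∀ x, g (ι x) = f x) ∧ changedEdges G g = gScore G ι f := by
  obtain ⟨g, hg, h⟩ := Nat.sInf_mem
    (s := {n | ∃ g : V → C, (∀ x, g (ι x) = f x) ∧ n = changedEdges G g})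
    ⟨_, Function.extend ι f fun _ => Classical.arbitrary C, hι.extend_apply f _, rfl⟩
  exact ⟨g, hg, h.symm⟩

lemma ncard_range_le_gScore_add_one [Finite V] [Nonempty C] (hG : G.Preconnected)
    (hι : ι.Injective) (f : X → C) : (Set.range f).ncard ≤ gScore G ι f + 1 := by
  obtain ⟨g, hg, hgf⟩ := exists_changedEdges_eq_gScore G hι f
  calc (Set.range f).ncard ≤ (Set.range g).ncard :=
        Set.ncard_le_ncard (Set.range_subset_iff.2 fun x => ⟨ι x, hg x⟩)
    _ ≤ gScore G ι f + 1 := hgf ▸ ncard_range_le_changedEdges_add_one hG g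

end Score

namespace PhyloTree

variable {X C : Type}

lemma reachable_induce_span (T : PhyloTree X) {Y : Set X} {x y : X} (hx : x ∈ Y) (hy : y ∈ Y)
    {p : T.G.Walk (T.ι x) (T.ι y)} (hp : p.IsPath) {v : T.V} (hv : v ∈ p.support) :
    (T.G.induce (T.span Y)).Reachable
      ⟨T.ι x, T.ι_mem_span hx⟩ ⟨v, x, hx, y, hy, p, hp, hv⟩ := by
  classical
  exact ⟨(p.takeUntil v hv).induce (T.span Y) fun w hw =>
    ⟨x, hx, y, hy, p, hp, p.support_takeUntil_subset_support hv hw⟩⟩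

lemma preconnected_induce_span (T : PhyloTree X) (Y : Set X) :
    (T.G.induce (T.span Y)).Preconnected := by
  classical
  rintro ⟨u, x, hx, y, hy, p, hp, hu⟩ ⟨v, x', hx', y', hy', q, hq, hv⟩
  obtain ⟨r, hr⟩ := (T.conn.preconnected (T.ι x) (T.ι x')).some.toPath
  exact ((T.reachable_induce_span hx hy hp hu).symm.trans
    (T.reachable_induce_span hx hx' hr r.end_mem_support)).trans
    (T.reachable_induce_span hx' hy' hq hv)

lemma restScore_le_changedEdges (T : PhyloTree X) {Y : Set X} {f : X → C} {g : T.V → C}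
    (hg : ∀ y ∈ Y, g (T.ι y) = f y) : T.restScore Y f ≤ changedEdges T.G g := by
  have := T.finV
  calc T.restScore Y f
      ≤ changedEdges (T.G.induce (T.span Y)) (g ∘ Embedding.induce (T.span Y)) :=
        gScore_le_changedEdges fun y => hg y.1 y.2
    _ ≤ changedEdges T.G g := changedEdges_comp_embedding_le _ g

lemma ncard_image_le_restScore_add_one [Nonempty C] (T : PhyloTree X) (Y : Set X) (f : X → C) :
    (f '' Y).ncard ≤ T.restScore Y f + 1 := by
  have := T.finV
  rw [Set.image_eq_range]
  exact ncard_range_le_gScore_add_one (T.preconnected_induce_span Y)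
    (fun a b h => Subtype.ext (T.inj (congrArg Subtype.val h))) _

end PhyloTree

theorem homoplasyFree_restrict_score_general {X C : Type} (hX : 3 ≤ Nat.card X)
    (T : PhyloTree X) (f : X → C) (hf : T.score f = (Set.range f).ncard - 1) (k : X) :
    (f k ∈ f '' {x | x ≠ k} → T.restScore {x | x ≠ k} f = T.score f) ∧
    (f k ∉ f '' {x | x ≠ k} → T.restScore {x | x ≠ k} f = T.score f - 1) := by
  classical
  have := T.finV
  have : Finite X := Finite.of_injective T.ι T.inj
  have : Nonempty C := ⟨f k⟩
  obtain ⟨g, hg, hgf⟩ :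
      ∃ g : T.V → C, (∀ x, g (T.ι x) = f x) ∧ changedEdges T.G g = T.score f :=
    exists_changedEdges_eq_gScore T.G T.inj f
  have hlower := T.ncard_image_le_restScore_add_one {x | x ≠ k} f
  have hupper : T.restScore {x | x ≠ k} f ≤ T.score f :=
    (T.restScore_le_changedEdges fun y _ => hg y).trans_eq hgf
  rw [Set.range_eq_insert_image_setOf_ne f k] at hf
  refine ⟨fun hk => ?_, fun hk => ?_⟩
  · rw [Set.insert_eq_of_mem hk] at hf
    omega
  · rw [Set.ncard_insert_of_notMem hk] at hf
    have : Nontrivial X := Finite.one_lt_card_iff_nontrivial.1 (by omega)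
    obtain ⟨y, hy⟩ := exists_ne k
    obtain ⟨c, hc⟩ := exists_changedEdges_recolor_lt T.conn.preconnected g
      (u := T.ι k) (v := T.ι y) (by rw [hg, hg]; exact fun h => hk ⟨y, hy, h.symm⟩)
    have hrecolor := T.restScore_le_changedEdges (Y := {x | x ≠ k}) (f := f)
      (g := fun w => if g w = g (T.ι k) then c else g w) fun x hx => by
        rw [hg, hg, if_neg fun h => hk ⟨x, hx, h⟩]
    omega

/-- If `f` is homoplasy-free on the binary phylogenetic `X`-tree `T`
(`|X| ≥ 3`) and `k ∈ X`, then the parsimony score of `f|_{X∖{k}}` on `T|_{X∖{k}}` equals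
`l_T(f)` if the state `f k` also occurs among `X∖{k}`, and `l_T(f) - 1` otherwise. -/
theorem homoplasyFree_restrict_score {X C : Type} [Finite C] (hX : 3 ≤ Nat.card X)
    (T : PhyloTree X) (f : X → C) (hf : T.score f = (Set.range f).ncard - 1) (k : X) :
    (f k ∈ f '' {x | x ≠ k} → T.restScore {x | x ≠ k} f = T.score f) ∧
    (f k ∉ f '' {x | x ≠ k} → T.restScore {x | x ≠ k} f = T.score f - 1) :=
  homoplasyFree_restrict_score_general hX T f hf k
end

section
/- Let S be the alignment on X = {1,2,3,4,5} over the state set {A,C} consisting of two copies of AACCC, three copies of ACACC, three copies of AACCA, three copies of AACAC and four copies of AAACC (fifteen characters in total). Then T = ((1,3),2,(4,5)) is the unique MP tree for S. -/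
/-- The five-taxa binary alignment of Proposition `bennyprop` (states `A = 0`, `C = 1`):
two copies of `AACCC`, three of `ACACC`, three of `AACCA`, three of `AACAC` and four of
`AAACC`. -/
def Sben : List (Fin 5 → Fin 2) :=
  List.replicate 2 ![0,0,1,1,1] ++ List.replicate 3 ![0,1,0,1,1] ++
  List.replicate 3 ![0,0,1,1,0] ++ List.replicate 3 ![0,0,1,0,1] ++
  List.replicate 4 ![0,0,0,1,1]

/-!
A binary phylogenetic tree on five taxa has `8` vertices and `7` edges (handshake lemma), three
of them internal. No internal vertex carries three leaves, so the five leaves sit on the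
internal vertices as `2 + 1 + 2`, and the tree is a caterpillar `((i,j),k,(l,m))`. The
caterpillar structure names `8` distinct vertices and `7` edges, so it is an isomorphism with a
fixed model caterpillar `catTree`, and parsimony scores can be computed there: over all labelled
caterpillars, `((1,3),2,(4,5))` (with taxa numbered from `0`: `Cat5 0 2 1 3 4`) scores `23` on
`Sben` and every other one scores more.
-/

namespace SimpleGraph

variable {V W : Type} {G : SimpleGraph V} {H : SimpleGraph W}

lemma Connected.mem_of_adj_closed (hG : G.Connected) {s : Set V}
    (hs : ∀ u v, u ∈ s → G.Adj u v → v ∈ s) {u : V} (hu : u ∈ s) (v : V) : v ∈ s := by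
  by_contra hv
  obtain ⟨p⟩ := hG.preconnected u v
  obtain ⟨d, -, hd, hd'⟩ := p.exists_boundary_dart s hu hv
  exact hd' (hs _ _ hd d.adj)

lemma Hom.adj_iff_of_card_edgeSet_le [Finite W] (φ : G →g H) (hφ : Function.Injective φ)
    (hE : Nat.card H.edgeSet ≤ Nat.card G.edgeSet) {u v : V} :
    H.Adj (φ u) (φ v) ↔ G.Adj u v := by
  refine ⟨fun h => ?_, φ.map_adj⟩
  have himage : Sym2.map φ '' G.edgeSet = H.edgeSet := by
    refine Set.eq_of_subset_of_ncard_le ?_ ?_ (Set.toFinite _)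
    · rintro _ ⟨e, he, rfl⟩
      exact φ.map_mem_edgeSet he
    · rwa [Set.ncard_image_of_injective _ (Sym2.map.injective hφ), ← Nat.card_coe_set_eq,
        ← Nat.card_coe_set_eq]
  obtain ⟨e, he, hev⟩ : s(φ u, φ v) ∈ Sym2.map φ '' G.edgeSet := himage ▸ h
  rw [← Sym2.map_mk, (Sym2.map.injective hφ).eq_iff] at hev
  rwa [hev, mem_edgeSet] at he

end SimpleGraph

section Transport

variable {V W X Y C : Type}

lemma changedEdges_comp_iso {G : SimpleGraph V} {H : SimpleGraph W} (e : G ≃g H)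
    (g : W → C) : changedEdges G (g ∘ e) = changedEdges H g := by
  refine Set.ncard_congr (fun d _ => d.map e) ?_ ?_ ?_
  · rintro d ⟨hd, hg⟩
    exact ⟨e.map_mem_edgeSet_iff.2 hd, by rwa [Sym2.map_map]⟩
  · intro d d' _ _ h
    exact Sym2.map.injective e.injective h
  · rintro d ⟨hd, hg⟩
    refine ⟨d.map e.symm, ⟨e.symm.map_mem_edgeSet_iff.2 hd, ?_⟩, ?_⟩
    · simpa [Sym2.map_map, Function.comp_def] using hg
    · simp [Sym2.map_map]

lemma changedEdges_eq_card_filter [DecidableEq C] {G : SimpleGraph V} {s : Finset (Sym2 V)}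
    (hs : G.edgeSet = s) (g : V → C) :
    changedEdges G g = (s.filter fun d => ¬(d.map g).IsDiag).card := by
  rw [changedEdges, hs, ← Set.ncard_coe_finset, Finset.coe_filter]
  rfl

lemma gScore_comp_iso {G : SimpleGraph V} {H : SimpleGraph W} (e : G ≃g H) (ι : X → V)
    (f : X → C) : gScore H (e ∘ ι) f = gScore G ι f := by
  unfold gScore
  congr 1
  ext n
  constructor
  · rintro ⟨g, hg, rfl⟩
    exact ⟨g ∘ e, hg, (changedEdges_comp_iso e g).symm⟩
  · rintro ⟨g, hg, rfl⟩
    refine ⟨g ∘ e.symm, fun x => by simp [hg], ?_⟩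
    rw [← changedEdges_comp_iso e, Function.comp_assoc]
    simp

lemma gScore_comp_equiv (G : SimpleGraph V) (σ : Y ≃ X) (ι : X → V) (f : X → C) :
    gScore G (ι ∘ σ) (f ∘ σ) = gScore G ι f := by
  simp only [gScore, Function.comp_apply, ← σ.forall_congr_right]

lemma gScore_sumInl [Fintype Y] [DecidableEq Y] [Fintype C] [Nonempty C]
    (G : SimpleGraph (X ⊕ Y)) (f : X → C) :
    gScore G Sum.inl f =
      Finset.univ.inf' Finset.univ_nonempty fun g : Y → C => changedEdges G (Sum.elim f g) := by
  rw [Finset.inf'_eq_csInf_image, Finset.coe_univ, Set.image_univ, gScore]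
  congr 1
  ext n
  constructor
  · rintro ⟨g, hg, rfl⟩
    refine ⟨g ∘ Sum.inr, congrArg _ (funext ?_)⟩
    rintro (x | y)
    exacts [(hg x).symm, rfl]
  · rintro ⟨g, rfl⟩
    exact ⟨Sum.elim f g, fun _ => rfl, rfl⟩

end Transport

namespace PhyloTree

variable {X : Type} (T : PhyloTree X)

lemma exists_adj_ι (x : X) : ∃ v, T.G.Adj (T.ι x) v := by
  obtain ⟨v, hv⟩ := Set.ncard_eq_one.1 (T.leafDeg x)
  exact ⟨v, show v ∈ T.G.neighborSet (T.ι x) by simp [hv]⟩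

/-- Handshake lemma: `2 (|V| - 1) = ∑ deg = |X| + 3 (|V| - |X|)`. -/
lemma card_add_two [Finite X] : Nat.card T.V + 2 = 2 * Nat.card X := by
  have := T.finV
  have := Fintype.ofFinite T.V
  have := Fintype.ofFinite X
  classical
  have hdeg : ∀ v, T.G.degree v = (T.G.neighborSet v).ncard := fun v => by
    rw [Set.ncard_eq_toFinset_card', Set.toFinset_card, T.G.card_neighborSet_eq_degree]
  set L := Finset.univ.map ⟨T.ι, T.inj⟩
  have hL : ∑ v ∈ L, T.G.degree v = Fintype.card X := by
    simp [L, hdeg, T.leafDeg]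
  have hLc : ∑ v ∈ Lᶜ, T.G.degree v = 3 * Lᶜ.card := by
    rw [Finset.sum_congr rfl fun v hv => (hdeg v).trans (T.innerDeg v (by simpa [L] using hv)),
      Finset.sum_const, smul_eq_mul, mul_comm]
  have hcard : L.card + Lᶜ.card = Fintype.card T.V := L.card_add_card_compl
  have hedges := (SimpleGraph.isTree_iff_connected_and_card.1 ⟨T.conn, T.acyc⟩).2
  rw [Nat.card_eq_fintype_card (α := T.G.edgeSet), ← SimpleGraph.edgeFinset_card] at hedges
  have hsum := T.G.sum_degrees_eq_twice_card_edges
  rw [← Finset.sum_compl_add_sum L, hL, hLc] at hsum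
  simp only [Nat.card_eq_fintype_card, L, Finset.card_map, Finset.card_univ] at *
  omega

variable {T}

lemma eq_of_adj_ι {x : X} {u v : T.V} (hu : T.G.Adj (T.ι x) u) (hv : T.G.Adj (T.ι x) v) :
    u = v := by
  obtain ⟨w, hw⟩ := Set.ncard_eq_one.1 (T.leafDeg x)
  have hu' : u ∈ T.G.neighborSet (T.ι x) := hu
  have hv' : v ∈ T.G.neighborSet (T.ι x) := hv
  rw [hw] at hu' hv'
  exact hu'.trans hv'.symm

lemma notMem_range_of_adj_of_adj {v u w : T.V} (hu : T.G.Adj v u) (hw : T.G.Adj v w)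
    (huw : u ≠ w) : v ∉ Set.range T.ι := by
  rintro ⟨x, rfl⟩
  exact huw (eq_of_adj_ι hu hw)

/-- Such a vertex and its neighbours form a connected component, hence the whole tree. -/
lemma card_le_of_forall_adj_ι {v : T.V} (h : ∀ w, T.G.Adj v w → w ∈ Set.range T.ι) :
    Nat.card T.V ≤ (T.G.neighborSet v).ncard + 1 := by
  have := T.finV
  have hall : ∀ u, u ∈ insert v (T.G.neighborSet v) := by
    refine T.conn.mem_of_adj_closed ?_ (Set.mem_insert v _)
    rintro u w (rfl | hu) huw
    · exact Or.inr huw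
    · obtain ⟨x, rfl⟩ := h u hu
      exact Or.inl (eq_of_adj_ι huw hu.symm)
  calc Nat.card T.V = (Set.univ : Set T.V).ncard := (Set.ncard_univ _).symm
    _ ≤ (insert v (T.G.neighborSet v)).ncard :=
      Set.ncard_le_ncard (fun u _ => hall u) (Set.toFinite _)
    _ ≤ (T.G.neighborSet v).ncard + 1 := Set.ncard_insert_le _ _

lemma adj_ι_notMem_range (hX : 3 ≤ Nat.card X) {x : X} {v : T.V} (h : T.G.Adj (T.ι x) v) :
    v ∉ Set.range T.ι := by
  have := T.finV
  have : Finite X := .of_injective T.ι T.inj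
  rintro ⟨y, rfl⟩
  have hle := card_le_of_forall_adj_ι (v := T.ι y) fun w hw => ⟨x, eq_of_adj_ι h.symm hw⟩
  have := T.card_add_two
  rw [T.leafDeg y] at hle
  omega

lemma not_adj_three_ι (hX : 4 ≤ Nat.card X) {v : T.V} {x y z : X} (hxy : x ≠ y) (hxz : x ≠ z)
    (hyz : y ≠ z) (hx : T.G.Adj v (T.ι x)) (hy : T.G.Adj v (T.ι y)) (hz : T.G.Adj v (T.ι z)) :
    False := by
  have := T.finV
  have : Finite X := .of_injective T.ι T.inj
  have hv := notMem_range_of_adj_of_adj hx hy (T.inj.ne hxy)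
  have hN : {T.ι x, T.ι y, T.ι z} = T.G.neighborSet v := by
    refine Set.eq_of_subset_of_ncard_le ?_ ?_ (Set.toFinite _)
    · rintro w (rfl | rfl | rfl) <;> assumption
    · rw [T.innerDeg v hv, Set.ncard_insert_of_notMem (by simp [T.inj.ne hxy, T.inj.ne hxz]),
        Set.ncard_pair (T.inj.ne hyz)]
  have hle := card_le_of_forall_adj_ι (v := v) fun w hw => by
    rw [← SimpleGraph.mem_neighborSet, ← hN] at hw
    rcases hw with rfl | rfl | rfl <;> exact ⟨_, rfl⟩
  have := T.card_add_two
  rw [T.innerDeg v hv] at hle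
  omega

section Counting

variable (T) [Fintype X]

section

variable [Fintype T.V] [DecidableEq T.V]

def innerVertices : Finset T.V := (Finset.univ.map ⟨T.ι, T.inj⟩)ᶜ

variable {T}

lemma mem_innerVertices {v : T.V} : v ∈ T.innerVertices ↔ v ∉ Set.range T.ι := by
  simp [innerVertices]

end

variable [DecidableRel T.G.Adj]

def leavesAt (v : T.V) : Finset X := Finset.univ.filter fun x => T.G.Adj v (T.ι x)

variable {T}

lemma card_leavesAt_le_two (hX : 4 ≤ Fintype.card X) (v : T.V) : (T.leavesAt v).card ≤ 2 := by
  by_contra! h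
  obtain ⟨x, hx, y, hy, z, hz, hxy, hxz, hyz⟩ := Finset.two_lt_card.1 h
  simp only [leavesAt, Finset.mem_filter, Finset.mem_univ, true_and] at hx hy hz
  exact not_adj_three_ι (by rwa [Nat.card_eq_fintype_card]) hxy hxz hyz hx hy hz

variable [Fintype T.V] [DecidableEq T.V]

lemma card_leavesAt_add_card_filter_adj {v : T.V} (hv : v ∉ Set.range T.ι) :
    (T.leavesAt v).card + (T.innerVertices.filter (T.G.Adj v)).card = 3 := by
  have hN : T.G.neighborFinset v =
      (T.leavesAt v).map ⟨T.ι, T.inj⟩ ∪ T.innerVertices.filter (T.G.Adj v) := by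
    ext w
    by_cases hw : w ∈ Set.range T.ι
    · obtain ⟨x, rfl⟩ := hw
      simp [leavesAt, innerVertices]
    · simp only [Finset.mem_union, Finset.mem_map, Finset.mem_filter, mem_innerVertices,
        SimpleGraph.mem_neighborFinset, hw, not_false_eq_true, true_and]
      exact (or_iff_right_of_imp fun ⟨x, _, hx⟩ => absurd ⟨x, hx⟩ hw).symm
  rw [← Finset.card_map ⟨T.ι, T.inj⟩, ← Finset.card_union_of_disjoint, ← hN, ← T.innerDeg v hv,
    Set.ncard_eq_toFinset_card']
  · rfl
  · refine Finset.disjoint_left.2 fun w hw hw' => ?_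
    obtain ⟨x, -, rfl⟩ := Finset.mem_map.1 hw
    exact mem_innerVertices.1 (Finset.mem_filter.1 hw').1 ⟨x, rfl⟩

lemma sum_card_leavesAt (hX : 3 ≤ Fintype.card X) :
    ∑ v ∈ T.innerVertices, (T.leavesAt v).card = Fintype.card X := by
  have hone : ∀ x, (T.innerVertices.filter fun v => T.G.Adj v (T.ι x)).card = 1 := by
    intro x
    obtain ⟨w, hw⟩ := T.exists_adj_ι x
    rw [Finset.card_eq_one]
    refine ⟨w, Finset.ext fun v => ?_⟩
    simp only [Finset.mem_filter, Finset.mem_singleton, mem_innerVertices]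
    refine ⟨fun h => eq_of_adj_ι h.2.symm hw, ?_⟩
    rintro rfl
    exact ⟨adj_ι_notMem_range (by rwa [Nat.card_eq_fintype_card]) hw, hw.symm⟩
  simpa [leavesAt, hone, Finset.bipartiteAbove, Finset.bipartiteBelow] using
    Finset.sum_card_bipartiteAbove_eq_sum_card_bipartiteBelow
      (s := T.innerVertices) (t := Finset.univ) (r := fun v x => T.G.Adj v (T.ι x))

end Counting

end PhyloTree

namespace PhyloTree

variable {T : PhyloTree (Fin 5)}

lemma cat5_of_card_leavesAt [Fintype T.V] [DecidableEq T.V] [DecidableRel T.G.Adj]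
    {w u₁ u₂ : T.V} (hI : T.innerVertices = {w, u₁, u₂}) (hwu₁ : w ≠ u₁) (hwu₂ : w ≠ u₂)
    (hu₁u₂ : u₁ ≠ u₂) (hw : (T.leavesAt w).card = 1) (hu₁ : (T.leavesAt u₁).card = 2)
    (hu₂ : (T.leavesAt u₂).card = 2) :
    ∃ i j k l m, Function.Injective ![i, j, k, l, m] ∧ T.Cat5 i j k l m := by
  have hspine : T.innerVertices.filter (T.G.Adj w) = {u₁, u₂} := by
    refine Finset.eq_of_subset_of_card_le (fun v hv => ?_) ?_
    · simp only [hI, Finset.mem_filter, Finset.mem_insert, Finset.mem_singleton] at hv ⊢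
      obtain ⟨rfl | hv, hadj⟩ := hv
      exacts [absurd hadj (T.G.irrefl), hv]
    · have hdeg := card_leavesAt_add_card_filter_adj
        (mem_innerVertices.1 (by simp [hI] : w ∈ T.innerVertices))
      rw [Finset.card_pair hu₁u₂]
      omega
  have hwu : T.G.Adj w u₁ ∧ T.G.Adj w u₂ := by
    simp only [Finset.ext_iff, Finset.mem_filter, Finset.mem_insert, Finset.mem_singleton] at hspine
    exact ⟨((hspine u₁).2 (.inl rfl)).2, ((hspine u₂).2 (.inr rfl)).2⟩
  obtain ⟨k, hk⟩ := Finset.card_eq_one.1 hw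
  obtain ⟨i, j, hij, hij'⟩ := Finset.card_eq_two.1 hu₁
  obtain ⟨l, m, hlm, hlm'⟩ := Finset.card_eq_two.1 hu₂
  have hleaf : ∀ {v x}, x ∈ T.leavesAt v → T.G.Adj (T.ι x) v := fun hx =>
    (Finset.mem_filter.1 hx).2.symm
  have hi := hleaf (hij' ▸ Finset.mem_insert_self i {j})
  have hj := hleaf (hij' ▸ Finset.mem_insert_of_mem (Finset.mem_singleton_self j))
  have hk := hleaf (hk ▸ Finset.mem_singleton_self k)
  have hl := hleaf (hlm' ▸ Finset.mem_insert_self l {m})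
  have hm := hleaf (hlm' ▸ Finset.mem_insert_of_mem (Finset.mem_singleton_self m))
  have hne : ∀ {x y u v}, T.G.Adj (T.ι x) u → T.G.Adj (T.ι y) v → u ≠ v → x ≠ y := by
    rintro x y u v hu hv huv rfl
    exact huv (eq_of_adj_ι hu hv)
  refine ⟨i, j, k, l, m, ?_, u₁, w, u₂, hi, hj, hwu.1.symm, hk, hwu.2, hl, hm⟩
  rw [← List.nodup_ofFn]
  simp [hij, hlm, hne hi hk hwu₁.symm, hne hi hl hu₁u₂, hne hi hm hu₁u₂, hne hj hk hwu₁.symm,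
    hne hj hl hu₁u₂, hne hj hm hu₁u₂, hne hk hl hwu₂, hne hk hm hwu₂]

theorem exists_cat5 (T : PhyloTree (Fin 5)) :
    ∃ i j k l m, Function.Injective ![i, j, k, l, m] ∧ T.Cat5 i j k l m := by
  have := T.finV
  have := Fintype.ofFinite T.V
  classical
  have hI : T.innerVertices.card = 3 := by
    have := T.card_add_two
    simp only [innerVertices, Finset.card_compl, Finset.card_map, Finset.card_univ,
      Nat.card_eq_fintype_card, Fintype.card_fin] at this ⊢
    omega
  obtain ⟨p, q, r, hpq, hpr, hqr, hpqr⟩ := Finset.card_eq_three.1 hI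
  have hsum := sum_card_leavesAt (T := T) (by simp)
  rw [hpqr, Finset.sum_insert (by simp [hpq, hpr]), Finset.sum_pair hqr] at hsum
  have hp := card_leavesAt_le_two (T := T) (by simp) p
  have hq := card_leavesAt_le_two (T := T) (by simp) q
  have hr := card_leavesAt_le_two (T := T) (by simp) r
  simp only [Fintype.card_fin] at hsum
  rcases (by omega : (T.leavesAt p).card = 1 ∨ (T.leavesAt q).card = 1 ∨
      (T.leavesAt r).card = 1) with h | h | h
  · exact cat5_of_card_leavesAt hpqr hpq hpr hqr h (by omega) (by omega)
  · exact cat5_of_card_leavesAt (hpqr.trans (Finset.insert_comm _ _ _)) hpq.symm hqr hpr h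
      (by omega) (by omega)
  · refine cat5_of_card_leavesAt (u₁ := p) (u₂ := q) ?_ hpr.symm hqr.symm hpq h
      (by omega) (by omega)
    rw [hpqr, Finset.pair_comm q r, Finset.insert_comm p r]

end PhyloTree

/-- The edges of the caterpillar `((0,1),2,(3,4))`: taxon `t` is `Sum.inl t`, and the internal
vertices `Sum.inr 0 - Sum.inr 1 - Sum.inr 2` form its spine. -/
def catEdges : Finset (Sym2 (Fin 5 ⊕ Fin 3)) :=
  {s(.inl 0, .inr 0), s(.inl 1, .inr 0), s(.inl 2, .inr 1), s(.inl 3, .inr 2),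
    s(.inl 4, .inr 2), s(.inr 0, .inr 1), s(.inr 1, .inr 2)}

def catTree : SimpleGraph (Fin 5 ⊕ Fin 3) := .fromEdgeSet catEdges

lemma catTree_edgeSet : catTree.edgeSet = catEdges := by
  rw [catTree, SimpleGraph.edgeSet_fromEdgeSet, sdiff_eq_left, Set.disjoint_left]
  intro d hd
  revert d
  decide

lemma card_catTree_edgeSet : Nat.card catTree.edgeSet = 7 := by
  rw [catTree_edgeSet, Nat.card_coe_set_eq, Set.ncard_coe_finset]
  rfl

def catScore {C : Type} [Fintype C] [DecidableEq C] [Nonempty C] (f : Fin 5 → C) : ℕ :=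
  Finset.univ.inf' Finset.univ_nonempty fun g : Fin 3 → C =>
    (catEdges.filter fun d => ¬(d.map (Sum.elim f g)).IsDiag).card

lemma gScore_catTree {C : Type} [Fintype C] [DecidableEq C] [Nonempty C] (f : Fin 5 → C) :
    gScore catTree Sum.inl f = catScore f := by
  simp only [gScore_sumInl, changedEdges_eq_card_filter catTree_edgeSet, catScore]

/-- The parsimony score of `S` on the caterpillar `((σ 0, σ 1), σ 2, (σ 3, σ 4))`. -/
def catLength {C : Type} [Fintype C] [DecidableEq C] [Nonempty C] (S : List (Fin 5 → C))
    (σ : Fin 5 → Fin 5) : ℕ :=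
  (S.map fun f => catScore (f ∘ σ)).sum

/-- The second alternative says that the caterpillar is `((0,2),1,(3,4))` up to its symmetries. -/
lemma catLength_Sben (i j k l m : Fin 5) (h : [i, j, k, l, m].Nodup) :
    catLength Sben ![0, 2, 1, 3, 4] < catLength Sben ![i, j, k, l, m] ∨
      k = 1 ∧ ({i, j} = ({0, 2} : Finset (Fin 5)) ∧ {l, m} = ({3, 4} : Finset (Fin 5)) ∨
        {i, j} = ({3, 4} : Finset (Fin 5)) ∧ {l, m} = ({0, 2} : Finset (Fin 5))) := by
  revert i j k l m
  decide +kernel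

namespace PhyloTree.Cat5

variable {T T' : PhyloTree (Fin 5)} {i j k l m : Fin 5}

lemma reverse (h : T.Cat5 i j k l m) : T.Cat5 l m k i j := by
  obtain ⟨a, c, b, hi, hj, hac, hk, hcb, hl, hm⟩ := h
  exact ⟨b, c, a, hl, hm, hcb.symm, hk, hac.symm, hi, hj⟩

lemma of_pair_eq (h : T.Cat5 i j k l m) {i' j' l' m' : Fin 5}
    (hij : ({i, j} : Finset (Fin 5)) = {i', j'}) (hlm : ({l, m} : Finset (Fin 5)) = {l', m'}) :
    T.Cat5 i' j' k l' m' := by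
  obtain ⟨a, c, b, hi, hj, hac, hk, hcb, hl, hm⟩ := h
  rw [← Finset.coe_inj, Finset.coe_pair, Finset.coe_pair, Set.pair_eq_pair_iff] at hij hlm
  rcases hij with ⟨rfl, rfl⟩ | ⟨rfl, rfl⟩ <;> rcases hlm with ⟨rfl, rfl⟩ | ⟨rfl, rfl⟩ <;>
    exact ⟨a, c, b, ‹_›, ‹_›, hac, hk, hcb, ‹_›, ‹_›⟩

/-- The caterpillar structure pins down the whole tree: `Cat5` names 8 distinct vertices and
7 edges of `T`, and a binary tree on 5 taxa has exactly 8 vertices and 7 edges. -/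
lemma exists_iso (h : T.Cat5 i j k l m) (hinj : Function.Injective ![i, j, k, l, m]) :
    ∃ e : catTree ≃g T.G, ∀ t, e (.inl t) = T.ι (![i, j, k, l, m] t) := by
  have := T.finV
  obtain ⟨a, c, b, hi, hj, hac, hk, hcb, hl, hm⟩ := h
  have ha : a ∉ Set.range T.ι :=
    notMem_range_of_adj_of_adj hi.symm hj.symm (T.inj.ne (hinj.ne (by decide : (0 : Fin 5) ≠ 1)))
  have hb : b ∉ Set.range T.ι :=
    notMem_range_of_adj_of_adj hl.symm hm.symm (T.inj.ne (hinj.ne (by decide : (3 : Fin 5) ≠ 4)))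
  have hab : a ≠ b := by
    rintro rfl
    exact not_adj_three_ι (by simp) (hinj.ne (by decide : (0 : Fin 5) ≠ 1))
      (hinj.ne (by decide : (0 : Fin 5) ≠ 3)) (hinj.ne (by decide : (1 : Fin 5) ≠ 3))
      hi.symm hj.symm hl.symm
  have hc : c ∉ Set.range T.ι := notMem_range_of_adj_of_adj hac.symm hcb hab
  let φ : Fin 5 ⊕ Fin 3 → T.V := Sum.elim (T.ι ∘ ![i, j, k, l, m]) ![a, c, b]
  have hφ : Function.Injective φ := by
    refine (T.inj.comp hinj).sumElim ?_ ?_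
    · rw [← List.nodup_ofFn]
      simp [hac.ne, hcb.ne, hab]
    · intro t u htu
      fin_cases u
      exacts [ha ⟨_, htu⟩, hc ⟨_, htu⟩, hb ⟨_, htu⟩]
  have hedges : ∀ d ∈ catEdges, d.map φ ∈ T.G.edgeSet := by
    simp only [catEdges, Finset.mem_insert, Finset.mem_singleton]
    rintro d (rfl | rfl | rfl | rfl | rfl | rfl | rfl) <;> simpa [φ]
  let hom : catTree →g T.G := ⟨φ, fun {u v} huv => by
    simpa using hedges s(u, v) (by rw [← Finset.mem_coe, ← catTree_edgeSet]; exact huv)⟩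
  have hcard := T.card_add_two
  have htree := (SimpleGraph.isTree_iff_connected_and_card.1 ⟨T.conn, T.acyc⟩).2
  rw [Nat.card_fin] at hcard
  refine ⟨⟨Equiv.ofBijective φ (hφ.bijective_of_nat_card_le ?_),
    hom.adj_iff_of_card_edgeSet_le hφ ?_⟩, fun t => rfl⟩
  · rw [Nat.card_sum, Nat.card_fin, Nat.card_fin]
    omega
  · rw [card_catTree_edgeSet]
    omega

lemma scoreA_eq {C : Type} [Fintype C] [DecidableEq C] [Nonempty C] (h : T.Cat5 i j k l m)
    (hinj : Function.Injective ![i, j, k, l, m]) (S : List (Fin 5 → C)) :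
    T.scoreA S = catLength S ![i, j, k, l, m] := by
  obtain ⟨e, he⟩ := h.exists_iso hinj
  let σ := Equiv.ofBijective _ hinj.bijective_of_finite
  have hι : T.ι = e ∘ (Sum.inl ∘ σ.symm) := funext fun x => by
    rw [Function.comp_apply, Function.comp_apply, he]
    exact congrArg T.ι (σ.apply_symm_apply x).symm
  refine congrArg List.sum (List.map_congr_left fun f _ => ?_)
  calc gScore T.G T.ι f = gScore catTree (Sum.inl ∘ σ.symm) ((f ∘ σ) ∘ σ.symm) := by
        rw [hι, gScore_comp_iso, Function.comp_assoc, σ.self_comp_symm, Function.comp_id]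
    _ = catScore (f ∘ ![i, j, k, l, m]) := by
        rw [gScore_comp_equiv, gScore_catTree]
        rfl

lemma phyloIso (h : T.Cat5 i j k l m) (h' : T'.Cat5 i j k l m)
    (hinj : Function.Injective ![i, j, k, l, m]) : PhyloIso T T' := by
  obtain ⟨e, he⟩ := h.exists_iso hinj
  obtain ⟨e', he'⟩ := h'.exists_iso hinj
  refine ⟨e.symm.trans e', fun x => ?_⟩
  obtain ⟨t, rfl⟩ := hinj.bijective_of_finite.2 x
  rw [RelIso.trans_apply, ← he, RelIso.symm_apply_apply, he']

end PhyloTree.Cat5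

/-- For the above fifteen-character alignment `Sben` on five taxa over
`{A,C}`, the tree `T = ((1,3),2,(4,5))` is the unique MP tree. -/
theorem Sben_unique_MP (T : PhyloTree (Fin 5)) (hT : T.Cat5 0 2 1 3 4) :
    T.IsUniqueMP Sben := by
  have hT₀ : Function.Injective ![(0 : Fin 5), 2, 1, 3, 4] := by decide
  have key : ∀ T' : PhyloTree (Fin 5), T.scoreA Sben < T'.scoreA Sben ∨ T'.Cat5 0 2 1 3 4 := by
    intro T'
    obtain ⟨i, j, k, l, m, hinj, hcat⟩ := T'.exists_cat5
    rw [hT.scoreA_eq hT₀, hcat.scoreA_eq hinj]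
    rcases catLength_Sben i j k l m (List.nodup_ofFn.2 hinj) with
      hlt | ⟨rfl, ⟨hij, hlm⟩ | ⟨hij, hlm⟩⟩
    · exact .inl hlt
    · exact .inr (hcat.of_pair_eq hij hlm)
    · exact .inr (hcat.reverse.of_pair_eq hlm hij)
  refine ⟨fun T' => ?_, fun T' hne => ?_⟩
  · rcases key T' with hlt | hcat
    · exact hlt.le
    · rw [hT.scoreA_eq hT₀, hcat.scoreA_eq hT₀]
  · exact (key T').resolve_right fun hcat => hne (hT.phyloIso hcat hT₀)
end

section
/- Let S be the alignment on X = {1,2,3,4,5} over the state set {A,C} consisting of two copies of AACCC, three copies of ACACC, three copies of AACCA, three copies of AACAC and four copies of AAACC. Then: S|_{X∖{1}} has the unique MP quartet tree ((2,3),(4,5)); S|_{X∖{2}} has the unique MP quartet tree ((1,3),(4,5)); S|_{X∖{3}} has the unique MP quartet tree ((1,2),(4,5)); S|_{X∖{4}} has the unique MP quartet tree ((1,2),(3,5)); and S|_{X∖{5}} has the unique MP quartet tree ((1,2),(3,4)). Each of these five quartet trees is compatible with the tree T̂ = ((1,2),3,(4,5)), yet T̂ is not an MP tree for S: the tree ((1,3),2,(4,5))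 has strictly smaller parsimony score on S than T̂. -/
/-!
A binary phylogenetic tree on `n` taxa has exactly `n - 2` inner vertices: `n` leaves of degree 1
and `k` inner vertices of degree 3 on a tree with `n + k - 1` edges give `n + 3k = 2(n + k - 1)`.
Hence a tree on four taxa is one of the three quartet trees, and a tree on five taxa with the
caterpillar `((i,j),k,(l,m))` inside it is that caterpillar. Each such tree is identified with a
fixed model graph on `Fin (n + k)`; the parsimony score of a character then becomes a minimum over
the `2^k` states of the inner vertices, and every score and path needed for `Sben` is computed on
the model. The five quartets score `21 < 22, 22`, `21 < 25, 25`, `15 < 21, 21`, `18 < 20, 23` and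
`18 < 20, 23`, while `((1,3),2,(4,5))` scores `23` against `24` for `T̂`.
-/

open SimpleGraph Function Finset

namespace PhyloTree

variable {X : Type} (T : PhyloTree X)

lemma eq_of_adj_leaf {x : X} {u w : T.V} (hu : T.G.Adj (T.ι x) u) (hw : T.G.Adj (T.ι x) w) :
    u = w := by
  obtain ⟨a, ha⟩ := Set.ncard_eq_one.mp (T.leafDeg x)
  have hu' : u ∈ T.G.neighborSet (T.ι x) := hu
  have hw' : w ∈ T.G.neighborSet (T.ι x) := hw
  rw [ha] at hu' hw'
  exact hu'.trans hw'.symm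

lemma exists_adj_leaf (x : X) : ∃ u, T.G.Adj (T.ι x) u := by
  obtain ⟨u, hu⟩ := Set.ncard_eq_one.mp (T.leafDeg x)
  exact ⟨u, show u ∈ T.G.neighborSet (T.ι x) from hu ▸ rfl⟩

lemma notMem_range_of_adj {v a b : T.V} (hab : a ≠ b) (ha : T.G.Adj v a)
    (hb : T.G.Adj v b) : v ∉ Set.range T.ι := by
  rintro ⟨x, rfl⟩
  exact hab (T.eq_of_adj_leaf ha hb)

lemma ncard_neighborSet_le_three (v : T.V) : (T.G.neighborSet v).ncard ≤ 3 := by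
  by_cases hv : v ∈ Set.range T.ι
  · obtain ⟨x, rfl⟩ := hv
    rw [T.leafDeg x]
    omega
  · rw [T.innerDeg v hv]

lemma mem_of_adj_closed {s : Set T.V} {v : T.V} (hv : v ∈ s)
    (hs : ∀ a ∈ s, ∀ b, T.G.Adj a b → b ∈ s) (w : T.V) : w ∈ s := by
  obtain ⟨p⟩ := T.conn.preconnected v w
  induction p with
  | nil => exact hv
  | cons h _ ih => exact ih (hs _ hv _ h)

lemma eq_or_adj_of_forall_adj_mem_range {u : T.V} (hu : ∀ w, T.G.Adj u w → w ∈ Set.range T.ι)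
    (v : T.V) : v = u ∨ T.G.Adj u v := by
  refine T.mem_of_adj_closed (s := {v | v = u ∨ T.G.Adj u v}) (Or.inl rfl) ?_ v
  rintro a (rfl | ha) b hab
  · exact Or.inr hab
  · obtain ⟨x, rfl⟩ := hu a ha
    exact Or.inl (T.eq_of_adj_leaf hab ha.symm)

lemma ncard_edgeSet_add_one : T.G.edgeSet.ncard + 1 = Nat.card T.V := by
  classical
  have := T.finV
  have := Fintype.ofFinite T.V
  rw [Nat.card_eq_fintype_card, ← (show T.G.IsTree from ⟨T.conn, T.acyc⟩).card_edgeFinset,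
    Set.ncard_eq_toFinset_card', edgeFinset]

lemma card_V_add_two : Nat.card T.V + 2 = 2 * Nat.card X := by
  classical
  have := T.finV
  have := Fintype.ofFinite T.V
  have hdeg : ∀ v, T.G.degree v = (T.G.neighborSet v).ncard := fun v => by
    rw [Set.ncard_eq_toFinset_card']
    rfl
  have hleaf : ∑ v ∈ univ with v ∈ Set.range T.ι, T.G.degree v = #{v | v ∈ Set.range T.ι} := by
    rw [card_eq_sum_ones]
    refine sum_congr rfl fun v hv => ?_
    obtain ⟨x, rfl⟩ := (mem_filter.mp hv).2
    rw [hdeg, T.leafDeg x]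
  have hinner : ∑ v ∈ univ with v ∉ Set.range T.ι, T.G.degree v =
      3 * #{v | v ∉ Set.range T.ι} := by
    rw [card_eq_sum_ones, mul_sum]
    exact sum_congr rfl fun v hv => by rw [hdeg, T.innerDeg v (mem_filter.mp hv).2, mul_one]
  have hnleaf : #{v | v ∈ Set.range T.ι} = Nat.card X := by
    rw [← Set.ncard_range_of_injective T.inj, Set.ncard_eq_toFinset_card']
    congr 1
    ext v
    simp
  have hsum := T.G.sum_degrees_eq_twice_card_edges
  rw [← sum_filter_add_sum_filter_not univ (· ∈ Set.range T.ι), hleaf, hinner] at hsum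
  have hsplit := card_filter_add_card_filter_not (s := univ) (· ∈ Set.range T.ι)
  have hedges := T.ncard_edgeSet_add_one
  rw [Set.ncard_eq_toFinset_card', Nat.card_eq_fintype_card] at hedges
  rw [card_univ] at hsplit
  rw [Nat.card_eq_fintype_card, ← hnleaf]
  change #T.G.edgeFinset + 1 = _ at hedges
  omega

lemma card_V_add_two_of_bijective {m : ℕ} {xs : Fin m → X} (hxs : Bijective xs) :
    Nat.card T.V + 2 = 2 * m := by
  rw [T.card_V_add_two, ← Nat.card_eq_of_bijective _ hxs, Nat.card_fin]

lemma notMem_range_of_adj_leaf (hX : 2 < Nat.card X) {x : X} {w : T.V}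
    (h : T.G.Adj (T.ι x) w) : w ∉ Set.range T.ι := by
  rintro ⟨z, rfl⟩
  have hstar : ∀ v, v = T.ι z ∨ T.G.Adj (T.ι z) v :=
    T.eq_or_adj_of_forall_adj_mem_range fun w hw => ⟨x, T.eq_of_adj_leaf h.symm hw⟩
  have hV : (Set.univ : Set T.V) ⊆ {T.ι z, T.ι x} := fun v _ => by
    rcases hstar v with rfl | hv
    · exact Set.mem_insert _ _
    · exact Set.mem_insert_of_mem _ (T.eq_of_adj_leaf hv h.symm)
  have := T.card_V_add_two
  have := (Set.ncard_le_ncard hV).trans (Set.ncard_insert_le _ _)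
  rw [Set.ncard_univ, Set.ncard_singleton] at this
  omega

end PhyloTree

lemma gScore_eq_of_forall_le {V X C : Type} {G : SimpleGraph V} {ι : X → V} {f : X → C} {n : ℕ}
    (hmem : ∃ g : V → C, (∀ x, g (ι x) = f x) ∧ changedEdges G g = n)
    (hle : ∀ g : V → C, (∀ x, g (ι x) = f x) → n ≤ changedEdges G g) : gScore G ι f = n := by
  refine IsLeast.csInf_eq ⟨?_, ?_⟩
  · obtain ⟨g, hg, rfl⟩ := hmem
    exact ⟨g, hg, rfl⟩
  · rintro _ ⟨g, hg, rfl⟩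
    exact hle g hg

section Model

variable {C : Type} [DecidableEq C]

def changeCount {W : Type} (E : Finset (Sym2 W)) (h : W → C) : ℕ :=
  #{e ∈ E | ¬ (e.map h).IsDiag}

variable [Fintype C] [Nonempty C]

def modelScore {n k : ℕ} (E : Finset (Sym2 (Fin (n + k)))) (a : Fin n → C) : ℕ :=
  univ.inf' univ_nonempty fun s : Fin k → C => changeCount E (Fin.append a s)

def modelScoreA {X : Type} {n k : ℕ} (E : Finset (Sym2 (Fin (n + k)))) (xs : Fin n → X)
    (S : List (X → C)) : ℕ :=
  (S.map fun f => modelScore E (f ∘ xs)).sum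

end Model

abbrev IsModelPath {N : ℕ} (E : Finset (Sym2 (Fin N))) (i j : Fin N) (l : List (Fin N)) : Prop :=
  l.head? = some i ∧ l.getLast? = some j ∧ l.IsChain (fun a b => s(a, b) ∈ E) ∧ l.Nodup

abbrev IsModelSplit {N : ℕ} (E : Finset (Sym2 (Fin N))) (i j i' j' : Fin N)
    (l₁ l₂ : List (Fin N)) : Prop :=
  IsModelPath E i j l₁ ∧ IsModelPath E i' j' l₂ ∧ ∀ v ∈ l₁, v ∉ l₂

/-- An identification of `T` with the graph on `Fin (n + k)` with edge set `E`, in which the vertex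
`Fin.castAdd k i` is the leaf `xs i`. -/
structure PhyloTree.ModelEquiv {X : Type} (T : PhyloTree X) {n k : ℕ}
    (E : Finset (Sym2 (Fin (n + k)))) (xs : Fin n → X) where
  toEquiv : Fin (n + k) ≃ T.V
  castAdd_eq : ∀ i, toEquiv (Fin.castAdd k i) = T.ι (xs i)
  edgeSet_eq : T.G.edgeSet = Sym2.map toEquiv '' E

namespace PhyloTree.ModelEquiv

variable {X : Type} {T : PhyloTree X} {n k : ℕ} {E : Finset (Sym2 (Fin (n + k)))}
  {xs : Fin n → X}

/-- Once the leaves and `k = n - 2` distinct inner vertices are placed, the vertex map is onto by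
counting vertices, and the `n + k - 1` edges of `E` exhaust the edges of the tree. -/
noncomputable def ofInner (hxs : Bijective xs) (inner : Fin k → T.V) (hinj : Injective inner)
    (hinner : ∀ j, inner j ∉ Set.range T.ι)
    (hE : ∀ e ∈ E, Sym2.map (Fin.append (T.ι ∘ xs) inner) e ∈ T.G.edgeSet) (hk : k + 2 = n)
    (hcard : #E + 1 = n + k) : T.ModelEquiv E xs :=
  have := T.finV
  have hV := T.card_V_add_two_of_bijective hxs
  have hv : Injective (Fin.append (T.ι ∘ xs) inner) :=
    Fin.append_injective_iff.mpr ⟨T.inj.comp hxs.1, hinj, fun i j h => hinner j ⟨_, h⟩⟩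
  { toEquiv := Equiv.ofBijective _ (hv.bijective_of_nat_card_le (by rw [Nat.card_fin]; omega))
    castAdd_eq := Fin.append_left _ _
    edgeSet_eq := by
      have hncard := T.ncard_edgeSet_add_one
      refine (Set.eq_of_subset_of_ncard_le (s := Sym2.map (Fin.append (T.ι ∘ xs) inner) '' E)
        ?_ ?_ (Set.toFinite _)).symm
      · rintro _ ⟨e, he, rfl⟩
        exact hE e he
      · rw [Set.ncard_image_of_injective _ (Sym2.map.injective hv), Set.ncard_coe_finset]
        omega }

lemma adj_iff (M : T.ModelEquiv E xs) (i j : Fin (n + k)) :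
    T.G.Adj (M.toEquiv i) (M.toEquiv j) ↔ s(i, j) ∈ E := by
  rw [← mem_edgeSet, M.edgeSet_eq, ← Sym2.map_mk,
    (Sym2.map.injective M.toEquiv.injective).mem_set_image, mem_coe]

lemma changedEdges_eq (M : T.ModelEquiv E xs) {C : Type} [DecidableEq C] (g : T.V → C) :
    changedEdges T.G g = changeCount E (g ∘ M.toEquiv) := by
  have : {e ∈ T.G.edgeSet | ¬ (Sym2.map g e).IsDiag} =
      Sym2.map M.toEquiv '' ↑{e ∈ E | ¬ (e.map (g ∘ M.toEquiv)).IsDiag} := by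
    rw [M.edgeSet_eq]
    ext e
    simp only [Set.mem_image, mem_coe, mem_filter, ← Sym2.map_map]
    constructor
    · rintro ⟨⟨e, he, rfl⟩, h⟩
      exact ⟨e, ⟨he, h⟩, rfl⟩
    · rintro ⟨e, ⟨he, h⟩, rfl⟩
      exact ⟨⟨e, he, rfl⟩, h⟩
  rw [changedEdges, this, Set.ncard_image_of_injective _ (Sym2.map.injective M.toEquiv.injective),
    Set.ncard_coe_finset, changeCount]

lemma phyloIso (M : T.ModelEquiv E xs) {T' : PhyloTree X} (M' : T'.ModelEquiv E xs)
    (hxs : Surjective xs) : PhyloIso T T' := by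
  refine ⟨⟨M.toEquiv.symm.trans M'.toEquiv, fun {a b} => ?_⟩, fun x => ?_⟩
  · obtain ⟨i, rfl⟩ := M.toEquiv.surjective a
    obtain ⟨j, rfl⟩ := M.toEquiv.surjective b
    simp [M.adj_iff, M'.adj_iff]
  · obtain ⟨i, rfl⟩ := hxs x
    simp [← M.castAdd_eq, ← M'.castAdd_eq]

lemma exists_isPath (M : T.ModelEquiv E xs) {i j : Fin (n + k)} {l : List (Fin (n + k))}
    (hl : IsModelPath E i j l) :
    ∃ p : T.G.Walk (M.toEquiv i) (M.toEquiv j), p.IsPath ∧ p.support = l.map M.toEquiv := by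
  obtain ⟨hhead, hlast, hchain, hnodup⟩ := hl
  have hne : l.map M.toEquiv ≠ [] := by simp [← List.head?_eq_none_iff, hhead]
  have hchain' : (l.map M.toEquiv).IsChain T.G.Adj := by
    rw [List.isChain_map]
    exact hchain.imp fun a b h => (M.adj_iff a b).mpr h
  refine ⟨(Walk.ofSupport _ hne hchain').copy ?_ ?_, ?_, ?_⟩
  · rw [List.head_eq_iff_head?_eq_some, List.head?_map, hhead]
    rfl
  · rw [List.getLast_eq_iff_getLast?_eq_some, List.getLast?_map, hlast]
    rfl
  · rw [Walk.isPath_def, Walk.support_copy, Walk.support_ofSupport]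
    exact hnodup.map M.toEquiv.injective
  · rw [Walk.support_copy, Walk.support_ofSupport]

lemma split (M : T.ModelEquiv E xs) (a b c d : Fin n) (l₁ l₂ : List (Fin (n + k)))
    (h : IsModelSplit E (Fin.castAdd k a) (Fin.castAdd k b) (Fin.castAdd k c) (Fin.castAdd k d)
      l₁ l₂) :
    T.Split (xs a) (xs b) (xs c) (xs d) := by
  obtain ⟨h₁, h₂, hdisj⟩ := h
  obtain ⟨p, hp, hps⟩ := M.exists_isPath h₁
  obtain ⟨q, hq, hqs⟩ := M.exists_isPath h₂
  refine ⟨p.copy (M.castAdd_eq a) (M.castAdd_eq b), q.copy (M.castAdd_eq c) (M.castAdd_eq d),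
    by simpa using hp, by simpa using hq, fun v hv hv' => ?_⟩
  rw [Walk.support_copy, hps] at hv
  rw [Walk.support_copy, hqs] at hv'
  obtain ⟨i, hi, rfl⟩ := List.mem_map.mp hv
  exact hdisj i hi ((List.mem_map_of_injective M.toEquiv.injective).mp hv')

variable {C : Type} [Fintype C] [DecidableEq C] [Nonempty C]

lemma score_eq (M : T.ModelEquiv E xs) (hxs : Surjective xs) (f : X → C) :
    T.score f = modelScore E (f ∘ xs) := by
  apply gScore_eq_of_forall_le
  · obtain ⟨s, -, hs⟩ := exists_mem_eq_inf' univ_nonempty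
      fun s : Fin k → C => changeCount E (Fin.append (f ∘ xs) s)
    refine ⟨Fin.append (f ∘ xs) s ∘ M.toEquiv.symm, fun x => ?_, ?_⟩
    · obtain ⟨i, rfl⟩ := hxs x
      simp [← M.castAdd_eq]
    · rw [M.changedEdges_eq, modelScore, hs]
      simp [Function.comp_assoc]
  · intro g hg
    have hleaves : (fun i => (g ∘ M.toEquiv) (Fin.castAdd k i)) = f ∘ xs :=
      funext fun i => by simp [M.castAdd_eq, hg]
    rw [M.changedEdges_eq, ← Fin.append_castAdd_natAdd (f := g ∘ M.toEquiv), hleaves]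
    exact inf'_le _ (mem_univ _)

lemma scoreA_eq (M : T.ModelEquiv E xs) (hxs : Surjective xs) (S : List (X → C)) :
    T.scoreA S = modelScoreA E xs S :=
  congrArg List.sum (List.map_congr_left fun f _ => M.score_eq hxs f)

end PhyloTree.ModelEquiv

def quartetEdges : Finset (Sym2 (Fin (4 + 2))) := {s(0, 4), s(1, 4), s(4, 5), s(2, 5), s(3, 5)}

lemma PhyloTree.Cherries.nonempty_modelEquiv {Y : Type} {T : PhyloTree Y} {y₁ y₂ y₃ y₄ : Y}
    (h : T.Cherries y₁ y₂ y₃ y₄) (hy : Bijective ![y₁, y₂, y₃, y₄]) :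
    Nonempty (T.ModelEquiv quartetEdges ![y₁, y₂, y₃, y₄]) := by
  obtain ⟨u, v, h₁, h₂, huv, h₃, h₄⟩ := h
  have hleaves := T.inj.comp hy.1
  have hu := T.notMem_range_of_adj (hleaves.ne (by decide : (0 : Fin 4) ≠ 1)) h₁.symm h₂.symm
  have hv := T.notMem_range_of_adj (hleaves.ne (by decide : (2 : Fin 4) ≠ 3)) h₃.symm h₄.symm
  refine ⟨.ofInner hy ![u, v] (by simp [huv.ne]) ?_ ?_ rfl (by decide)⟩
  · intro j
    fin_cases j
    exacts [hu, hv]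
  · simp only [quartetEdges, mem_insert, mem_singleton]
    rintro e (rfl | rfl | rfl | rfl | rfl)
    exacts [h₁, h₂, huv, h₃, h₄]

namespace PhyloTree

variable {Y : Type} (T : PhyloTree Y)

lemma exists_adj_inner_of_card_eq_four (hY : Nat.card Y = 4) {u : T.V}
    (hu : u ∉ Set.range T.ι) :
    ∃ w, w ∉ Set.range T.ι ∧ T.G.Adj u w ∧ ∀ v, v ≠ u → v ≠ w → v ∈ Set.range T.ι := by
  have := T.finV
  have hinner : (Set.range T.ι)ᶜ.ncard = 2 := by
    have := Set.ncard_add_ncard_compl (Set.range T.ι)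
    have := T.card_V_add_two
    rw [Set.ncard_range_of_injective T.inj] at *
    omega
  obtain ⟨w, hw⟩ := Set.ncard_eq_one.mp
    ((Set.ncard_sdiff_singleton_of_mem (show u ∈ (Set.range T.ι)ᶜ from hu)).trans (by omega))
  have hwu : w ≠ u := fun h => by simpa [h] using hw.symm.subset (Set.mem_singleton w)
  have hleaf : ∀ v, v ≠ u → v ≠ w → v ∈ Set.range T.ι := fun v hvu hvw => by
    by_contra hv
    exact hvw (Set.mem_singleton_iff.mp (hw ▸ ⟨hv, hvu⟩))
  refine ⟨w, fun h => (hw.symm.subset (Set.mem_singleton w)).1 h, ?_, hleaf⟩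
  -- otherwise `u` and its three leaf neighbours would already be the whole tree, missing `w`
  by_contra huw
  rcases T.eq_or_adj_of_forall_adj_mem_range
      (fun v huv => hleaf v huv.ne' fun h => huw (h ▸ huv)) w with h | h
  exacts [hwu h, huw h]

lemma exists_cherries_of_card_eq_four (hY : Nat.card Y = 4) (y : Y) :
    ∃ z c d, z ≠ y ∧ c ≠ d ∧ T.Cherries y z c d := by
  have := T.finV
  obtain ⟨u, hyu⟩ := T.exists_adj_leaf y
  have hu := T.notMem_range_of_adj_leaf (by omega) hyu
  obtain ⟨w, hw, huw, hleaf⟩ := T.exists_adj_inner_of_card_eq_four hY hu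
  obtain ⟨p, hp⟩ : ∃ p, T.G.neighborSet u \ {T.ι y, w} = {p} := by
    refine Set.ncard_eq_one.mp ?_
    rw [Set.ncard_sdiff (by rintro _ (rfl | rfl); exacts [hyu.symm, huw]), T.innerDeg u hu,
      Set.ncard_pair fun h => hw ⟨y, h⟩]
  have hpu : p ∈ T.G.neighborSet u \ {T.ι y, w} := hp ▸ rfl
  obtain ⟨z, rfl⟩ := hleaf p (hpu.1 : T.G.Adj u p).ne' fun h => hpu.2 (Or.inr h)
  obtain ⟨p, q, hpq, hw₂⟩ := Set.ncard_eq_two.mp (show (T.G.neighborSet w \ {u}).ncard = 2 by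
    rw [Set.ncard_sdiff_singleton_of_mem (show u ∈ T.G.neighborSet w from huw.symm),
      T.innerDeg w hw])
  have hpw : p ∈ T.G.neighborSet w \ {u} := hw₂ ▸ Or.inl rfl
  have hqw : q ∈ T.G.neighborSet w \ {u} := hw₂ ▸ Or.inr rfl
  obtain ⟨c, rfl⟩ := hleaf p hpw.2 (hpw.1 : T.G.Adj w p).ne'
  obtain ⟨d, rfl⟩ := hleaf q hqw.2 (hqw.1 : T.G.Adj w q).ne'
  refine ⟨z, c, d, ?_, ?_, u, w, hyu, hpu.1.symm, huw, hpw.1.symm, hqw.1.symm⟩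
  · rintro rfl
    exact hpu.2 (Or.inl rfl)
  · rintro rfl
    exact hpq rfl

variable {T}

lemma Cherries.swap_right {y₁ y₂ y₃ y₄ : Y} (h : T.Cherries y₁ y₂ y₃ y₄) :
    T.Cherries y₁ y₂ y₄ y₃ :=
  let ⟨u, v, h₁, h₂, huv, h₃, h₄⟩ := h
  ⟨u, v, h₁, h₂, huv, h₄, h₃⟩

lemma Cherries.left_ne_right {y₁ y₂ y₃ y₄ : Y} (h : T.Cherries y₁ y₂ y₃ y₄) :
    y₁ ≠ y₃ ∧ y₁ ≠ y₄ ∧ y₂ ≠ y₃ ∧ y₂ ≠ y₄ := by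
  obtain ⟨u, v, h₁, h₂, huv, h₃, h₄⟩ := h
  have hne : ∀ {a b}, T.G.Adj (T.ι a) u → T.G.Adj (T.ι b) v → a ≠ b := by
    rintro a b ha hb rfl
    exact huv.ne (T.eq_of_adj_leaf ha hb)
  exact ⟨hne h₁ h₃, hne h₁ h₄, hne h₂ h₃, hne h₂ h₄⟩

variable (T)

lemma cherries_trichotomy {y₁ y₂ y₃ y₄ : Y} (hy : Bijective ![y₁, y₂, y₃, y₄]) :
    T.Cherries y₁ y₂ y₃ y₄ ∨ T.Cherries y₁ y₃ y₂ y₄ ∨ T.Cherries y₁ y₄ y₂ y₃ := by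
  obtain ⟨z, c, d, hz, hcd, h⟩ := T.exists_cherries_of_card_eq_four
    (by rw [← Nat.card_eq_of_bijective _ hy, Nat.card_fin]) y₁
  obtain ⟨hc, hd, hzc, hzd⟩ := h.left_ne_right
  have h' := h.swap_right
  have hall : ∀ y, y = y₁ ∨ y = y₂ ∨ y = y₃ ∨ y = y₄ := fun y => by
    obtain ⟨i, rfl⟩ := hy.2 y
    fin_cases i <;> simp
  rcases hall z with rfl | rfl | rfl | rfl <;> rcases hall c with rfl | rfl | rfl | rfl <;>
    rcases hall d with rfl | rfl | rfl | rfl <;> tauto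

variable {T}

lemma Cherries.isUniqueMP {C : Type} [Fintype C] [DecidableEq C] [Nonempty C]
    {y₁ y₂ y₃ y₄ : Y} (h : T.Cherries y₁ y₂ y₃ y₄) (hy : Bijective ![y₁, y₂, y₃, y₄])
    {S : List (Y → C)}
    (h₁ : modelScoreA quartetEdges ![y₁, y₂, y₃, y₄] S <
      modelScoreA quartetEdges ![y₁, y₃, y₂, y₄] S)
    (h₂ : modelScoreA quartetEdges ![y₁, y₂, y₃, y₄] S <
      modelScoreA quartetEdges ![y₁, y₄, y₂, y₃] S) :
    T.IsUniqueMP S := by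
  have hy₁ : Bijective ![y₁, y₃, y₂, y₄] := by
    convert hy.comp (Equiv.swap (1 : Fin 4) 2).bijective using 1
    ext i
    fin_cases i <;> rfl
  have hy₂ : Bijective ![y₁, y₄, y₂, y₃] := by
    convert hy.comp ((Equiv.swap (2 : Fin 4) 3).trans (Equiv.swap 1 3)).bijective using 1
    ext i
    fin_cases i <;> rfl
  obtain ⟨M⟩ := h.nonempty_modelEquiv hy
  have key : ∀ T' : PhyloTree Y,
      (PhyloIso T T' ∧ T.scoreA S = T'.scoreA S) ∨ T.scoreA S < T'.scoreA S := by
    intro T'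
    rw [M.scoreA_eq hy.2]
    rcases T'.cherries_trichotomy hy with h' | h' | h'
    · obtain ⟨M'⟩ := h'.nonempty_modelEquiv hy
      rw [M'.scoreA_eq hy.2]
      exact Or.inl ⟨M.phyloIso M' hy.2, rfl⟩
    · obtain ⟨M'⟩ := h'.nonempty_modelEquiv hy₁
      rw [M'.scoreA_eq hy₁.2]
      exact Or.inr h₁
    · obtain ⟨M'⟩ := h'.nonempty_modelEquiv hy₂
      rw [M'.scoreA_eq hy₂.2]
      exact Or.inr h₂
  refine ⟨fun T' => ?_, fun T' hT' => (key T').resolve_left fun h => hT' h.1⟩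
  rcases key T' with ⟨-, heq⟩ | hlt
  exacts [heq.le, hlt.le]

end PhyloTree

-- The model vertices `5, 6, 7` are the inner vertices `a, c, b` of `PhyloTree.Cat5`.
def caterpillarEdges : Finset (Sym2 (Fin (5 + 3))) :=
  {s(0, 5), s(1, 5), s(5, 6), s(2, 6), s(6, 7), s(3, 7), s(4, 7)}

lemma PhyloTree.Cat5.nonempty_modelEquiv {T : PhyloTree (Fin 5)} {i j k l m : Fin 5}
    (h : T.Cat5 i j k l m) (hx : Bijective ![i, j, k, l, m]) :
    Nonempty (T.ModelEquiv caterpillarEdges ![i, j, k, l, m]) := by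
  obtain ⟨a, c, b, h₁, h₂, hac, h₃, hcb, h₄, h₅⟩ := h
  have := T.finV
  have hleaves := T.inj.comp hx.1
  have ha := T.notMem_range_of_adj (hleaves.ne (by decide : (0 : Fin 5) ≠ 1)) h₁.symm h₂.symm
  have hb := T.notMem_range_of_adj (hleaves.ne (by decide : (3 : Fin 5) ≠ 4)) h₄.symm h₅.symm
  have hc := T.notMem_range_of_adj (fun h => ha ⟨k, h.symm⟩) hac.symm h₃.symm
  -- `a = b` would have the four leaves `i, j, l, m` as neighbours
  have hab : a ≠ b := by
    rintro rfl
    have hdeg : (({0, 1, 3, 4} : Finset (Fin 5)) : Set (Fin 5)).ncard ≤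
        (T.G.neighborSet a).ncard := by
      refine Set.ncard_le_ncard_of_injOn _ ?_ hleaves.injOn (Set.toFinite _)
      simp only [coe_insert, coe_singleton, Set.mem_insert_iff, Set.mem_singleton_iff]
      rintro t (rfl | rfl | rfl | rfl)
      exacts [h₁.symm, h₂.symm, h₄.symm, h₅.symm]
    rw [Set.ncard_coe_finset] at hdeg
    exact absurd (hdeg.trans (T.ncard_neighborSet_le_three a)) (by decide)
  have hinj : Injective ![a, c, b] := by
    intro p q hpq
    fin_cases p <;> fin_cases q <;> simp_all [hac.ne, hcb.ne, hac.ne', hcb.ne', Ne.symm hab]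
  refine ⟨.ofInner hx ![a, c, b] hinj ?_ ?_ rfl (by decide)⟩
  · intro j
    fin_cases j
    exacts [ha, hc, hb]
  · simp only [caterpillarEdges, mem_insert, mem_singleton]
    rintro e (rfl | rfl | rfl | rfl | rfl | rfl | rfl)
    exacts [h₁, h₂, hac, h₃, hcb, h₄, h₅]

/-- Taxa `1, …, 5` of the paper are `0, …, 4` here. -/
theorem Sben_quartets_compatible_but_not_MP :
    (∀ Q : PhyloTree ↥{x : Fin 5 | x ≠ 0},
      Q.Cherries ⟨1, by decide⟩ ⟨2, by decide⟩ ⟨3, by decide⟩ ⟨4, by decide⟩ →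
      Q.IsUniqueMP (subAl {x | x ≠ 0} Sben)) ∧
    (∀ Q : PhyloTree ↥{x : Fin 5 | x ≠ 1},
      Q.Cherries ⟨0, by decide⟩ ⟨2, by decide⟩ ⟨3, by decide⟩ ⟨4, by decide⟩ →
      Q.IsUniqueMP (subAl {x | x ≠ 1} Sben)) ∧
    (∀ Q : PhyloTree ↥{x : Fin 5 | x ≠ 2},
      Q.Cherries ⟨0, by decide⟩ ⟨1, by decide⟩ ⟨3, by decide⟩ ⟨4, by decide⟩ →
      Q.IsUniqueMP (subAl {x | x ≠ 2} Sben)) ∧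
    (∀ Q : PhyloTree ↥{x : Fin 5 | x ≠ 3},
      Q.Cherries ⟨0, by decide⟩ ⟨1, by decide⟩ ⟨2, by decide⟩ ⟨4, by decide⟩ →
      Q.IsUniqueMP (subAl {x | x ≠ 3} Sben)) ∧
    (∀ Q : PhyloTree ↥{x : Fin 5 | x ≠ 4},
      Q.Cherries ⟨0, by decide⟩ ⟨1, by decide⟩ ⟨2, by decide⟩ ⟨3, by decide⟩ →
      Q.IsUniqueMP (subAl {x | x ≠ 4} Sben)) ∧
    (∀ That : PhyloTree (Fin 5), That.Cat5 0 1 2 3 4 →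
      (That.Split 1 2 3 4 ∧ That.Split 0 2 3 4 ∧ That.Split 0 1 3 4 ∧
        That.Split 0 1 2 4 ∧ That.Split 0 1 2 3) ∧
      ∀ T' : PhyloTree (Fin 5), T'.Cat5 0 2 1 3 4 →
        T'.scoreA Sben < That.scoreA Sben) := by
  refine ⟨fun Q hQ => hQ.isUniqueMP (by decide) (by decide) (by decide),
    fun Q hQ => hQ.isUniqueMP (by decide) (by decide) (by decide),
    fun Q hQ => hQ.isUniqueMP (by decide) (by decide) (by decide),
    fun Q hQ => hQ.isUniqueMP (by decide) (by decide) (by decide),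
    fun Q hQ => hQ.isUniqueMP (by decide) (by decide) (by decide), fun That hThat => ?_⟩
  obtain ⟨M⟩ := hThat.nonempty_modelEquiv (by decide)
  refine ⟨⟨M.split 1 2 3 4 [1, 5, 6, 2] [3, 7, 4] (by decide),
    M.split 0 2 3 4 [0, 5, 6, 2] [3, 7, 4] (by decide),
    M.split 0 1 3 4 [0, 5, 1] [3, 7, 4] (by decide),
    M.split 0 1 2 4 [0, 5, 1] [2, 6, 7, 4] (by decide),
    M.split 0 1 2 3 [0, 5, 1] [2, 6, 7, 3] (by decide)⟩, fun T' hT' => ?_⟩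
  obtain ⟨M'⟩ := hT'.nonempty_modelEquiv (by decide)
  rw [M.scoreA_eq (by decide), M'.scoreA_eq (by decide)]
  decide
end
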